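/- arXiv:2011.05162 — 2 statements merged into one kernel-verified Lean document; each statement's English description precedes it below -/
import Mathlib

section
/- For every natural number n ≥ 4, the root s 0 does not lie in Rad (Rad F): no root of the general monic polynomial of degree n ≥ 4 can be written using rational operations on the coefficients and at most two nested levels of radicals (the paper's third impossibility result). -/
open MvPolynomial

/-- `E n` is the field of rational functions in `n` variables over `ℚ`. -/
noncomputable abbrev E (n : ℕ) : Type :=
  FractionRing (MvPolynomial (Fin n) ℚ)

/-- `s n i` is the image in `E n` of the variable `X i`; these are the roots of the
general monic polynomial of degree `n`. -/
noncomputable def s (n : ℕ) (i : Fin n) : E n :=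
  algebraMap (MvPolynomial (Fin n) ℚ) (E n) (X i)

/-- `F n` is the subfield of `E n` generated by the images of the elementary symmetric
polynomials `e₁, …, eₙ`, i.e. by the coefficients of the general monic polynomial
`∏ i, (Y - s i)` of degree `n`. -/
noncomputable def F (n : ℕ) : Subfield (E n) :=
  Subfield.closure
    (Set.range fun k : Fin n =>
      algebraMap (MvPolynomial (Fin n) ℚ) (E n) (esymm (Fin n) ℚ ((k : ℕ) + 1)))


/-- For a subfield `K` of a field `L`, `Rad K` is the subfield of `L` generated by `K`
together with all elements `y` such that `y ^ m ∈ K` for some integer `m ≥ 1`. -/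
def Rad {L : Type*} [Field L] (K : Subfield L) : Subfield L :=
  Subfield.closure ((K : Set L) ∪ {y : L | ∃ m : ℕ, 1 ≤ m ∧ y ^ m ∈ K})


/-! A permutation of the variables induces a `ℚ`-automorphism of `E n` fixing `F n`.
If a group acts by automorphisms fixing a subfield `K` of a field whose only roots of unity
are `±1`, each element sends a radical `y` over `K` (`y ^ m ∈ K`) to `±y`; these signs commute,
so commutators fix every radical and hence all of `Rad K`. Consequently second commutators of
permutation automorphisms fix `Rad (Rad F)`. But `⁅⁅(0 1), (0 2)⁆, ⁅(0 1), (0 3)⁆⁆ =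
⁅(0 1 2), (0 1 3)⁆` sends `0` to `1`, so it moves `s 0`.

The roots of unity of `ℚ(X₀, …, Xₙ₋₁)` are `±1`: they are integral over the integrally closed
ring `ℚ[X₀, …, Xₙ₋₁]`, hence units of it, hence rational constants. -/

open scoped commutatorElement

section RadicalCommutator

variable {G L : Type*} [Group G] [Field L] [MulSemiringAction G L]

theorem fixingSubgroup_subfieldClosure (s : Set L) :
    fixingSubgroup G (Subfield.closure s : Set L) = fixingSubgroup G s := by
  refine le_antisymm (fixingSubgroup_antitone G L Subfield.subset_closure) fun g hg => ?_
  rw [mem_fixingSubgroup_iff] at hg ⊢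
  exact Subfield.closure_le (t := RingHom.eqLocusField (MulSemiringAction.toRingHom G L g)
    (RingHom.id L)).mpr hg

variable (hL : ∀ (y : L) (m : ℕ), m ≠ 0 → y ^ m = 1 → y = 1 ∨ y = -1)
include hL

theorem smul_eq_or_eq_neg_of_pow_mem {K : Subfield L} {g : G}
    (hg : g ∈ fixingSubgroup G (K : Set L)) {y : L} {m : ℕ} (hm : m ≠ 0) (hy : y ^ m ∈ K) :
    g • y = y ∨ g • y = -y := by
  rcases eq_or_ne y 0 with rfl | hy0
  · simp
  have hpow : (g • y / y) ^ m = 1 := by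
    rw [div_pow, ← smul_pow', (mem_fixingSubgroup_iff G).mp hg _ hy, div_self (pow_ne_zero _ hy0)]
  rcases hL _ m hm hpow with h | h
  · exact .inl ((div_eq_one_iff_eq hy0).mp h)
  · exact .inr (by rw [← neg_one_mul, ← h, div_mul_cancel₀ _ hy0])

theorem commutatorElement_smul_of_pow_mem {K : Subfield L} {g h : G}
    (hg : g ∈ fixingSubgroup G (K : Set L)) (hh : h ∈ fixingSubgroup G (K : Set L))
    {y : L} {m : ℕ} (hm : m ≠ 0) (hy : y ^ m ∈ K) : ⁅g, h⁆ • y = y := by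
  have hsign : ∀ k ∈ fixingSubgroup G (K : Set L),
      (k • y = y ∧ k⁻¹ • y = y) ∨ (k • y = -y ∧ k⁻¹ • y = -y) := by
    intro k hk
    rcases smul_eq_or_eq_neg_of_pow_mem hL hk hm hy with hk' | hk'
    · exact .inl ⟨hk', inv_smul_eq_iff.mpr hk'.symm⟩
    · exact .inr ⟨hk', inv_smul_eq_iff.mpr (by rw [smul_neg, hk', neg_neg])⟩
  rw [commutatorElement_def, mul_smul, mul_smul, mul_smul]
  rcases hsign g hg with ⟨hg', hgi⟩ | ⟨hg', hgi⟩ <;>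
    rcases hsign h hh with ⟨hh', hhi⟩ | ⟨hh', hhi⟩ <;>
    simp only [hg', hgi, hh', hhi, smul_neg, neg_neg]

theorem commutator_fixingSubgroup_le_fixingSubgroup_rad (K : Subfield L) :
    ⁅fixingSubgroup G (K : Set L), fixingSubgroup G (K : Set L)⁆ ≤
      fixingSubgroup G (Rad K : Set L) := by
  rw [Subgroup.commutator_le]
  intro g hg h hh
  rw [Rad, fixingSubgroup_subfieldClosure, mem_fixingSubgroup_iff]
  rintro y (hy | ⟨m, hm, hy⟩)
  · exact commutatorElement_smul_of_pow_mem hL hg hh one_ne_zero (by rwa [pow_one])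
  · exact commutatorElement_smul_of_pow_mem hL hg hh (by omega) hy

theorem commutator_commutator_fixingSubgroup_le_fixingSubgroup_rad_rad (K : Subfield L) :
    ⁅⁅fixingSubgroup G (K : Set L), fixingSubgroup G (K : Set L)⁆,
      ⁅fixingSubgroup G (K : Set L), fixingSubgroup G (K : Set L)⁆⁆ ≤
        fixingSubgroup G (Rad (Rad K) : Set L) :=
  (Subgroup.commutator_mono (commutator_fixingSubgroup_le_fixingSubgroup_rad hL K)
    (commutator_fixingSubgroup_le_fixingSubgroup_rad hL K)).trans
    (commutator_fixingSubgroup_le_fixingSubgroup_rad hL (Rad K))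

end RadicalCommutator

theorem MvPolynomial.eq_one_or_eq_neg_one_of_pow_eq_one {σ K : Type*} [Field K] [LinearOrder K]
    [IsStrictOrderedRing K] {y : FractionRing (MvPolynomial σ K)} {m : ℕ} (hm : m ≠ 0)
    (hy : y ^ m = 1) : y = 1 ∨ y = -1 := by
  have hint : IsIntegral (MvPolynomial σ K) y :=
    ⟨Polynomial.X ^ m - 1, Polynomial.monic_X_pow_sub_C 1 hm, by simp [hy]⟩
  obtain ⟨p, rfl⟩ := IsIntegrallyClosed.isIntegral_iff.mp hint
  have hp : p ^ m = 1 :=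
    IsFractionRing.injective _ (FractionRing (MvPolynomial σ K)) (by rw [map_pow, hy, map_one])
  obtain ⟨c, -, rfl⟩ := isUnit_iff_eq_C_of_isReduced.mp (.of_pow_eq_one hp hm)
  have hc : c ^ m = 1 := C_injective σ K (by rw [map_pow, hp, C_1])
  rcases pow_eq_one_iff_cases.mp hc with h | h | ⟨h, -⟩
  · exact absurd h hm
  · simp [h]
  · simp [h]

@[simps]
noncomputable def MvPolynomial.renameAutHom (σ R : Type*) [CommSemiring R] :
    Equiv.Perm σ →* (MvPolynomial σ R ≃ₐ[R] MvPolynomial σ R) where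
  toFun e := renameEquiv R e
  map_one' := renameEquiv_refl R
  map_mul' e f := (renameEquiv_trans R f e).symm

noncomputable def permAut (n : ℕ) : Equiv.Perm (Fin n) →* (E n ≃ₐ[ℚ] E n) :=
  (IsFractionRing.fieldEquivOfAlgEquivHom ℚ (E n)).comp (renameAutHom (Fin n) ℚ)

theorem permAut_algebraMap {n : ℕ} (e : Equiv.Perm (Fin n)) (p : MvPolynomial (Fin n) ℚ) :
    permAut n e (algebraMap _ (E n) p) = algebraMap _ (E n) (rename e p) := by
  simp [permAut]

theorem permAut_s {n : ℕ} (e : Equiv.Perm (Fin n)) (i : Fin n) :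
    permAut n e (s n i) = s n (e i) := by
  rw [s, permAut_algebraMap, rename_X, s]

theorem permAut_mem_fixingSubgroup_F {n : ℕ} (e : Equiv.Perm (Fin n)) :
    permAut n e ∈ fixingSubgroup (E n ≃ₐ[ℚ] E n) (F n : Set (E n)) := by
  rw [F, fixingSubgroup_subfieldClosure, mem_fixingSubgroup_iff]
  rintro _ ⟨k, rfl⟩
  rw [AlgEquiv.smul_def, permAut_algebraMap, rename_esymm]

theorem s_injective (n : ℕ) : Function.Injective (s n) :=
  (IsFractionRing.injective (MvPolynomial (Fin n) ℚ) (E n)).comp (X_injective (R := ℚ))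

theorem Equiv.commutatorElement_commutatorElement_swap_apply {α : Type*} [DecidableEq α]
    {a b c d : α} (hab : a ≠ b) (hac : a ≠ c) (had : a ≠ d) (hbc : b ≠ c) (hbd : b ≠ d)
    (hcd : c ≠ d) : ⁅⁅swap a b, swap a c⁆, ⁅swap a b, swap a d⁆⁆ a = b := by
  simp [commutatorElement_def, swap_apply_of_ne_of_ne, hbd, hab.symm, hac.symm, had.symm,
    hbc.symm, hbd.symm, hcd.symm]

/-- **Third impossibility result**: for `n ≥ 4`, no root of the general monic polynomial of
degree `n` can be written using rational operations on the coefficients and at most two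
nested levels of radicals: `s 0 ∉ Rad (Rad F)`. -/
theorem third_impossibility (n : ℕ) (hn : 4 ≤ n) :
    s n ⟨0, by omega⟩ ∉ Rad (Rad (F n)) := by
  intro hmem
  let ι : Fin 4 ↪ Fin n := Fin.castLEEmb hn
  have hι : ∀ {i j : Fin 4}, i ≠ j → ι i ≠ ι j := ι.injective.ne
  have hfixF := permAut_mem_fixingSubgroup_F (n := n)
  set π := ⁅⁅Equiv.swap (ι 0) (ι 1), Equiv.swap (ι 0) (ι 2)⁆,
    ⁅Equiv.swap (ι 0) (ι 1), Equiv.swap (ι 0) (ι 3)⁆⁆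
  have hπ : permAut n π ∈ fixingSubgroup _ (Rad (Rad (F n)) : Set (E n)) := by
    refine commutator_commutator_fixingSubgroup_le_fixingSubgroup_rad_rad
      (fun _ _ => MvPolynomial.eq_one_or_eq_neg_one_of_pow_eq_one) _ ?_
    simp only [π, map_commutatorElement]
    exact Subgroup.commutator_mem_commutator
      (Subgroup.commutator_mem_commutator (hfixF _) (hfixF _))
      (Subgroup.commutator_mem_commutator (hfixF _) (hfixF _))
  have hfix : permAut n π (s n (ι 0)) = s n (ι 0) := (mem_fixingSubgroup_iff _).mp hπ _ hmem
  rw [permAut_s, Equiv.commutatorElement_commutatorElement_swap_apply (hι (by decide))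
    (hι (by decide)) (hι (by decide)) (hι (by decide)) (hι (by decide)) (hι (by decide))] at hfix
  exact hι (by decide) (s_injective n hfix)
end

section
/- For every natural number n ≥ 5 and every natural number N, the root s 0 does not lie in the N-fold iterate Rad^[N] F: for the general monic polynomial of degree n ≥ 5, no fixed number N of nested levels of radicals over the field of coefficients suffices to express a root. -/
open MvPolynomial

/-!
Every element of `Rad^[N] K` is solvable by radicals over `K`. Permuting the variables embeds
`Equiv.Perm (Fin n)` into `E n ≃ₐ[F n] E n`, and these automorphisms carry `s n 0` to every
`s n i`; since `s n 0` is a root of `∏ i, (X - s n i)`, whose coefficients lie in `F n` by Vieta,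
`E n` is a splitting field over `F n` of the minimal polynomial of `s n 0`. If `s n 0` were
solvable by radicals, Abel–Ruffini would make `E n ≃ₐ[F n] E n`, and with it
`Equiv.Perm (Fin n)`, solvable, which fails for `n ≥ 5`.
-/

open scoped Polynomial

section Radicals

variable {L : Type*} [Field L]

theorem rad_le {K T : Subfield L} (hKT : K ≤ T)
    (hT : ∀ y : L, ∀ m ≠ 0, y ^ m ∈ T → y ∈ T) : Rad K ≤ T := by
  refine Subfield.closure_le.mpr (Set.union_subset hKT ?_)
  rintro y ⟨m, hm, hy⟩
  exact hT y m (by omega) (hKT hy)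

theorem iterate_rad_le {K T : Subfield L} (hKT : K ≤ T)
    (hT : ∀ y : L, ∀ m ≠ 0, y ^ m ∈ T → y ∈ T) (N : ℕ) : Rad^[N] K ≤ T := by
  induction N with
  | zero => exact hKT
  | succ N ih => rw [Function.iterate_succ_apply']; exact rad_le ih hT

theorem iterate_rad_le_solvableByRad (K : Subfield L) (N : ℕ) :
    Rad^[N] K ≤ (solvableByRad K L).toSubfield :=
  iterate_rad_le (fun x hx => (solvableByRad K L).algebraMap_mem ⟨x, hx⟩)
    (fun _ _ hm => solvableByRad.rad_mem hm) N

end Radicals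

theorem Polynomial.IsSplittingField.isSolvable_algEquiv {K L : Type*} [Field K] [Field L]
    [Algebra K L] (p : K[X]) [p.IsSplittingField K L] (hp : Group.IsSolvable p.Gal) :
    Group.IsSolvable (L ≃ₐ[K] L) :=
  Group.isSolvable_of_isSolvable_injective (G' := p.Gal)
    (f := (AlgEquiv.autCongr (Polynomial.IsSplittingField.algEquiv L p)).toMonoidHom)
    (AlgEquiv.autCongr _).injective

noncomputable def MvPolynomial.renamePermHom (σ R : Type*) [CommSemiring R] :
    Equiv.Perm σ →* (MvPolynomial σ R ≃+* MvPolynomial σ R) where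
  toFun e := (renameEquiv R e).toRingEquiv
  map_one' := RingEquiv.ext fun p => by simp
  map_mul' e f := RingEquiv.ext fun p => by simp [rename_rename]

section GeneralPolynomial

variable {n : ℕ}

noncomputable def permRingEquiv (n : ℕ) : Equiv.Perm (Fin n) →* (E n ≃+* E n) :=
  (IsFractionRing.ringEquivOfRingEquivHom (MvPolynomial (Fin n) ℚ) (E n)).comp
    (renamePermHom (Fin n) ℚ)

theorem permRingEquiv_algebraMap (σ : Equiv.Perm (Fin n)) (p : MvPolynomial (Fin n) ℚ) :
    permRingEquiv n σ (algebraMap _ (E n) p) = algebraMap _ (E n) (rename σ p) :=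
  IsFractionRing.ringEquivOfRingEquiv_algebraMap _ p

theorem permRingEquiv_s (σ : Equiv.Perm (Fin n)) (i : Fin n) :
    permRingEquiv n σ (s n i) = s n (σ i) := by
  rw [s, permRingEquiv_algebraMap, rename_X, s]

theorem F_le_eqLocusField_permRingEquiv (σ : Equiv.Perm (Fin n)) :
    F n ≤ (permRingEquiv n σ : E n →+* E n).eqLocusField (RingHom.id (E n)) := by
  refine Subfield.closure_le.mpr ?_
  rintro _ ⟨k, rfl⟩
  exact (permRingEquiv_algebraMap σ _).trans (by rw [rename_esymm]; rfl)

noncomputable def permAlgEquiv (n : ℕ) : Equiv.Perm (Fin n) →* (E n ≃ₐ[F n] E n) :=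
  MonoidHom.mk'
    (fun σ => AlgEquiv.ofRingEquiv (f := permRingEquiv n σ) fun x =>
      F_le_eqLocusField_permRingEquiv σ x.2)
    fun σ τ => AlgEquiv.ext fun x => DFunLike.congr_fun (map_mul (permRingEquiv n) σ τ) x

theorem permAlgEquiv_s (σ : Equiv.Perm (Fin n)) (i : Fin n) :
    permAlgEquiv n σ (s n i) = s n (σ i) :=
  permRingEquiv_s σ i

theorem permAlgEquiv_injective : Function.Injective (permAlgEquiv n) := by
  refine (injective_iff_map_eq_one _).mpr fun σ hσ => Equiv.ext fun i => ?_
  have h : s n (σ i) = s n i := by rw [← permAlgEquiv_s, hσ]; rfl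
  exact MvPolynomial.X_injective (IsFractionRing.injective _ (E n) h)

theorem closure_range_s : Subfield.closure (Set.range (s n)) = ⊤ := by
  rw [eq_top_iff, ← IsFractionRing.closure_range_algebraMap (MvPolynomial (Fin n) ℚ) (E n),
    Subfield.closure_le]
  rintro _ ⟨p, rfl⟩
  induction p using MvPolynomial.induction_on with
  | C r => rw [← RingHom.comp_apply, eq_ratCast]; exact SubfieldClass.ratCast_mem _ r
  | add p q hp hq => rw [map_add]; exact add_mem hp hq
  | mul_X p i hp => rw [map_mul]; exact mul_mem hp (Subfield.subset_closure ⟨i, rfl⟩)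

theorem esymm_map_s (j : ℕ) :
    (Finset.univ.val.map (s n)).esymm j = algebraMap _ (E n) (esymm (Fin n) ℚ j) := by
  rw [← MvPolynomial.aeval_esymm_eq_multiset_esymm (Fin n) ℚ j (s n)]
  exact (DFunLike.congr_fun (aeval_unique (IsScalarTower.toAlgHom ℚ _ (E n))) _).symm

theorem esymm_map_s_mem_F {j : ℕ} (hj : j ≤ n) :
    (Finset.univ.val.map (s n)).esymm j ∈ F n := by
  rw [esymm_map_s]
  rcases Nat.eq_zero_or_pos j with rfl | hj0
  · rw [esymm_zero, map_one]; exact one_mem _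
  · exact Subfield.subset_closure ⟨⟨j - 1, by omega⟩, by simp [Nat.sub_add_cancel hj0]⟩

theorem prod_X_sub_C_s_mem_lifts :
    ∏ i, (Polynomial.X - Polynomial.C (s n i)) ∈ Polynomial.lifts (algebraMap (F n) (E n)) := by
  have hprod : ∏ i, (Polynomial.X - Polynomial.C (s n i)) =
      ((Finset.univ.val.map (s n)).map fun t => Polynomial.X - Polynomial.C t).prod := by
    rw [Multiset.map_map]; rfl
  have hcard : Multiset.card (Finset.univ.val.map (s n)) = n := by simp
  rw [hprod, Multiset.prod_X_sub_X_eq_sum_esymm, Polynomial.lifts_iff_liftsRing, hcard]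
  refine Subring.sum_mem _ fun j hj => mul_mem (pow_mem (neg_mem (one_mem _)) _) (mul_mem ?_ ?_)
  · exact Polynomial.C_mem_lifts _
      (⟨_, esymm_map_s_mem_F (Finset.mem_range_succ_iff.mp hj)⟩ : F n)
  · exact Polynomial.X_pow_mem_lifts _ _

theorem minpoly_s_eq (i j : Fin n) : minpoly (F n) (s n j) = minpoly (F n) (s n i) := by
  rw [← Equiv.swap_apply_left i j, ← permAlgEquiv_s, minpoly.algEquiv_eq]

theorem map_minpoly_s_dvd (i : Fin n) :
    (minpoly (F n) (s n i)).map (algebraMap (F n) (E n)) ∣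
      ∏ j, (Polynomial.X - Polynomial.C (s n j)) := by
  obtain ⟨q, hq⟩ := (Polynomial.mem_lifts _).mp (prod_X_sub_C_s_mem_lifts (n := n))
  rw [← hq]
  refine Polynomial.map_dvd _ (minpoly.dvd _ _ ?_)
  rw [Polynomial.aeval_def, Polynomial.eval₂_eq_eval_map, hq, Polynomial.eval_prod]
  exact Finset.prod_eq_zero (Finset.mem_univ i) (by simp)

theorem isSplittingField_minpoly_s (i : Fin n) :
    (minpoly (F n) (s n i)).IsSplittingField (F n) (E n) := by
  have hdvd := map_minpoly_s_dvd i
  have hprod : ∏ j, (Polynomial.X - Polynomial.C (s n j)) ≠ 0 :=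
    (Polynomial.monic_prod_of_monic _ _ fun j _ => Polynomial.monic_X_sub_C _).ne_zero
  have hs_mem : Set.range (s n) ⊆ IntermediateField.adjoin (F n)
      ((minpoly (F n) (s n i)).rootSet (E n)) := by
    rintro _ ⟨j, rfl⟩
    refine IntermediateField.subset_adjoin _ _ (Polynomial.mem_rootSet'.mpr
      ⟨fun h => hprod (zero_dvd_iff.mp (h ▸ hdvd)), ?_⟩)
    rw [← minpoly_s_eq i j]
    exact minpoly.aeval _ _
  refine isSplittingField_iff_intermediateField.mpr
    ⟨(Polynomial.Splits.prod fun j _ => Polynomial.Splits.X_sub_C _).of_dvd hprod hdvd,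
      top_unique fun x _ => ?_⟩
  exact Subfield.closure_le.mpr hs_mem (closure_range_s ▸ Subfield.mem_top x)

theorem s_notMem_solvableByRad (hn : 5 ≤ n) (i : Fin n) :
    s n i ∉ solvableByRad (F n) (E n) := by
  intro h
  have := isSplittingField_minpoly_s i
  have := Polynomial.IsSplittingField.isSolvable_algEquiv (L := E n) _ (isSolvable_gal_minpoly h)
  exact Equiv.Perm.not_isSolvable (Fin n) (by simpa using hn)
    (Group.isSolvable_of_isSolvable_injective permAlgEquiv_injective)

end GeneralPolynomial

/-- For `n ≥ 5` and any `N : ℕ`, the root `s 0` of the general monic polynomial of degree `n`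
does not lie in the `N`-fold iterate `Rad^[N] F`: no fixed number of nested levels of radicals
over the field of coefficients suffices to express a root. -/
theorem no_bounded_radical_tower (n : ℕ) (hn : 5 ≤ n) (N : ℕ) :
    s n ⟨0, by omega⟩ ∉ Rad^[N] (F n) :=
  fun h => s_notMem_solvableByRad hn _ (iterate_rad_le_solvableByRad (F n) N h)
end
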